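/- (Abstract bound on A) Let $\mathsf{T}$ be a closed densely defined operator on a Hilbert space, $\Pi$ an orthogonal projection with $\Pi\mathsf{T}\Pi=0$, and $\mathsf{A}=(1+(\mathsf{T}\Pi)^*\mathsf{T}\Pi)^{-1}(\mathsf{T}\Pi)^*$. Then $\|\mathsf{A}g\|\le \frac{1}{2}\|(1-\Pi)g\|$ and $\|\mathsf{T}\mathsf{A}g\|\le \|(1-\Pi)g\|$ for all $g$ in the appropriate domain. -/
import Mathlib


open RealInnerProductSpace ContinuousLinearMap

/-- Lemma 1 of Dolbeault–Mouhot–Schmeiser (bounded-operator formulation): if `P` is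
an orthogonal projection with `PTP = 0` and `A = (1+(TP)*(TP))⁻¹(TP)*`
(characterized by `A g + (TP)*(TP)(A g) = (TP)* g`), then
`‖A g‖ ≤ ½‖(1−P)g‖` and `‖T A g‖ ≤ ‖(1−P)g‖`. -/
theorem dms_lemma_one {H : Type*} [NormedAddCommGroup H]
    [InnerProductSpace ℝ H] [CompleteSpace H]
    (T P A : H →L[ℝ] H)
    (hP_idem : P ∘L P = P)
    (hP_sym : ∀ f g : H, ⟪P f, g⟫ = ⟪f, P g⟫)
    (hPTP : ∀ g : H, P (T (P g)) = 0)
    (hA : ∀ g : H,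
      A g + (ContinuousLinearMap.adjoint (T ∘L P)) (T (P (A g)))
        = (ContinuousLinearMap.adjoint (T ∘L P)) g) :
    ∀ g : H, ‖A g‖ ≤ (1 / 2) * ‖g - P g‖ ∧ ‖T (A g)‖ ≤ ‖g - P g‖ := by
  intro g
  set B := T ∘L P with hB
  set Bs := ContinuousLinearMap.adjoint B with hBs
  set f := A g with hf
  have hPP : ∀ x, P (P x) = P x := by
    intro x
    have := congrArg (fun (L : H →L[ℝ] H) => L x) hP_idem
    simpa using this
  have hPB : ∀ x, P (Bs x) = Bs x := by
    intro x
    apply ext_inner_right ℝ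
    intro y
    rw [hP_sym]
    rw [hBs, ContinuousLinearMap.adjoint_inner_left, ContinuousLinearMap.adjoint_inner_left]
    simp [hB, hPP]
  have heq : f + Bs (B f) = Bs g := by
    have := hA g
    simpa [hB, hBs, ContinuousLinearMap.comp_apply] using this
  have hPf : P f = f := by
    have : f = Bs g - Bs (B f) := by
      rw [← heq]; abel
    rw [this]
    rw [map_sub, hPB, hPB]
  -- inner product of the equation with f
  have key : ‖f‖ ^ 2 + ‖B f‖ ^ 2 = ⟪g - P g, B f⟫ := by
    have h1 : ⟪f + Bs (B f), f⟫ = ⟪Bs g, f⟫ := by rw [heq]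
    have h2 : ⟪Bs (B f), f⟫ = ‖B f‖ ^ 2 := by
      rw [hBs, ContinuousLinearMap.adjoint_inner_left, real_inner_self_eq_norm_sq]
    have h3 : ⟪Bs g, f⟫ = ⟪g, B f⟫ := by
      rw [hBs, ContinuousLinearMap.adjoint_inner_left]
    have h4 : ⟪P g, B f⟫ = 0 := by
      rw [hP_sym]
      have : P (B f) = 0 := by simpa [hB] using hPTP f
      rw [this, inner_zero_right]
    rw [inner_sub_left, h4, sub_zero]
    rw [inner_add_left, h2, real_inner_self_eq_norm_sq] at h1
    rw [← h3, ← h1]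
  have hle : ‖f‖ ^ 2 + ‖B f‖ ^ 2 ≤ ‖g - P g‖ * ‖B f‖ := by
    rw [key]
    exact real_inner_le_norm _ _
  have ha : (0:ℝ) ≤ ‖f‖ := norm_nonneg _
  have hb : (0:ℝ) ≤ ‖B f‖ := norm_nonneg _
  have hc : (0:ℝ) ≤ ‖g - P g‖ := norm_nonneg _
  have hTf : T f = B f := by
    rw [hB]
    simp [ContinuousLinearMap.comp_apply, hPf]
  constructor
  · rcases hb.eq_or_lt with hb0 | hb0
    · nlinarith [sq_nonneg ‖f‖]
    · have h2ab : (2 * ‖f‖) * ‖B f‖ ≤ ‖g - P g‖ * ‖B f‖ := by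
        nlinarith [sq_nonneg (‖f‖ - ‖B f‖)]
      have := le_of_mul_le_mul_right h2ab hb0
      linarith
  · rw [hTf]
    nlinarith [sq_nonneg ‖f‖, mul_nonneg hb hc]
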